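/- arXiv:2407.14236 — 5 statements merged into one kernel-verified Lean document; each statement's English description precedes it below -/
import Mathlib

section
/- For every integer n ≥ 1, the rational function R_n satisfies the symmetry R_n(−t−Mn) = −R_n(t) as an identity of rational functions in t. -/
/-- The Pochhammer symbol `(x)ₖ = x(x+1)⋯(x+k-1)` for a real `x`. -/
noncomputable def poch (x : ℝ) (k : ℕ) : ℝ := ∏ m ∈ Finset.range k, (x + m)

/-- The rational function
`Rₙ(t) = (∏_{j=1}^J ((M-2δⱼ)n)!^{s/J} / n!^{2r}) · (2t+Mn) · (t-rn)_{rn} (t+Mn+1)_{rn}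
  / ∏_{j=1}^J (t+δⱼn)_{(M-2δⱼ)n+1}^{s/J}`. -/
noncomputable def Rfun (J M : ℕ) (δ : ℕ → ℕ) (s r n : ℕ) (t : ℝ) : ℝ :=
  (∏ j ∈ Finset.Icc 1 J, (((M - 2 * δ j) * n).factorial : ℝ) ^ (s / J)) /
      (n.factorial : ℝ) ^ (2 * r)
    * (2 * t + (M : ℝ) * n) * poch (t - (r : ℝ) * n) (r * n)
    * poch (t + (M : ℝ) * n + 1) (r * n)
    / ∏ j ∈ Finset.Icc 1 J, poch (t + (δ j : ℝ) * n) ((M - 2 * δ j) * n + 1) ^ (s / J)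

/-- Reflection formula for the Pochhammer symbol. -/
lemma poch_reflect (x : ℝ) (k : ℕ) : poch (-x - k + 1) k = (-1) ^ k * poch x k := by
  unfold poch
  calc ∏ m ∈ Finset.range k, (-x - (k : ℝ) + 1 + m)
      = ∏ m ∈ Finset.range k, -(x + ((k - 1 - m : ℕ) : ℝ)) := by
        refine Finset.prod_congr rfl fun m hm => ?_
        have hmk : m < k := Finset.mem_range.mp hm
        have h1 : ((k - 1 - m : ℕ) : ℝ) = (k : ℝ) - 1 - m := by
          rw [Nat.sub_sub, Nat.cast_sub (by omega : 1 + m ≤ k)]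
          push_cast; ring
        rw [h1]; ring
    _ = ∏ m ∈ Finset.range k, -(x + (m : ℝ)) :=
        Finset.prod_range_reflect (fun m => -(x + (m : ℝ))) k
    _ = (-1) ^ k * ∏ m ∈ Finset.range k, (x + (m : ℝ)) := by
        have h : ∀ m ∈ Finset.range k, -(x + (m : ℝ)) = (-1) * (x + m) := fun m _ => by ring
        rw [Finset.prod_congr rfl h, Finset.prod_mul_distrib, Finset.prod_const,
          Finset.card_range]

/-- **Symmetry of `Rₙ`.** For every `n ≥ 1`, `Rₙ(-t-Mn) = -Rₙ(t)` as an identity of rational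
functions in `t` (i.e. at every point `t` which is not a pole). -/
theorem Rfun_symmetry
    (J M : ℕ) (δ : ℕ → ℕ) (hJ : 1 ≤ J) (hM : 1 ≤ M)
    (hδ : ∀ i ∈ Finset.Icc 1 J, ∀ j ∈ Finset.Icc 1 J, i ≤ j → δ i ≤ δ j)
    (hδM : ∀ j ∈ Finset.Icc 1 J, 2 * δ j < M)
    (s : ℕ) (hs : 0 < s) (hsJ : 2 * J ∣ s)
    (r : ℕ) (hr : r = ⌊(s : ℝ) / Real.log s ^ 2⌋₊)
    (n : ℕ) (hn : 1 ≤ n) :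
    ∀ t : ℝ,
      (∏ j ∈ Finset.Icc 1 J, poch (t + (δ j : ℝ) * n) ((M - 2 * δ j) * n + 1)) ≠ 0 →
      Rfun J M δ s r n (-t - (M : ℝ) * n) = -Rfun J M δ s r n t := by
  intro t _
  -- `s / J` is even
  obtain ⟨c, hc⟩ := hsJ
  have hsJ2 : s / J = 2 * c := by
    subst hc
    rw [show 2 * J * c = J * (2 * c) by ring, Nat.mul_div_cancel_left _ (by omega)]
  have hneg1 : (-1 : ℝ) ^ (s / J) = 1 := by
    rw [hsJ2, pow_mul]; norm_num
  unfold Rfun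
  have h1 : poch (-t - (M : ℝ) * n - (r : ℝ) * n) (r * n)
      = (-1) ^ (r * n) * poch (t + (M : ℝ) * n + 1) (r * n) := by
    have := poch_reflect (t + (M : ℝ) * n + 1) (r * n)
    rw [show -(t + (M : ℝ) * n + 1) - ((r * n : ℕ) : ℝ) + 1
        = -t - (M : ℝ) * n - (r : ℝ) * n by push_cast; ring] at this
    exact this
  have h2 : poch (-t - (M : ℝ) * n + (M : ℝ) * n + 1) (r * n)
      = (-1) ^ (r * n) * poch (t - (r : ℝ) * n) (r * n) := by
    have := poch_reflect (t - (r : ℝ) * n) (r * n)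
    rw [show -(t - (r : ℝ) * n) - ((r * n : ℕ) : ℝ) + 1
        = -t - (M : ℝ) * n + (M : ℝ) * n + 1 by push_cast; ring] at this
    exact this
  have hD : (∏ j ∈ Finset.Icc 1 J,
        poch (-t - (M : ℝ) * n + (δ j : ℝ) * n) ((M - 2 * δ j) * n + 1) ^ (s / J))
      = ∏ j ∈ Finset.Icc 1 J,
        poch (t + (δ j : ℝ) * n) ((M - 2 * δ j) * n + 1) ^ (s / J) := by
    refine Finset.prod_congr rfl fun j hj => ?_
    have h2δ : 2 * δ j ≤ M := le_of_lt (hδM j hj)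
    have hcast : (((M - 2 * δ j) * n : ℕ) : ℝ) = ((M : ℝ) - 2 * δ j) * n := by
      rw [Nat.cast_mul, Nat.cast_sub h2δ]; push_cast; ring
    have := poch_reflect (t + (δ j : ℝ) * n) ((M - 2 * δ j) * n + 1)
    rw [show -(t + (δ j : ℝ) * n) - (((M - 2 * δ j) * n + 1 : ℕ) : ℝ) + 1
        = -t - (M : ℝ) * n + (δ j : ℝ) * n by push_cast [hcast]; ring] at this
    rw [this, mul_pow, ← pow_mul, mul_comm ((M - 2 * δ j) * n + 1) (s / J), pow_mul,
      hneg1, one_pow, one_mul]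
  rw [hD, h1, h2, ← neg_div]
  congr 1
  generalize (∏ j ∈ Finset.Icc 1 J, (((M - 2 * δ j) * n).factorial : ℝ) ^ (s / J)) = C
  generalize poch (t + (M : ℝ) * n + 1) (r * n) = P1
  generalize poch (t - (r : ℝ) * n) (r * n) = P2
  generalize hE' : ((-1 : ℝ)) ^ (r * n) = E
  have hE : E * E = 1 := by rw [← hE', ← pow_add, ← two_mul, pow_mul]; norm_num
  linear_combination (-(C / (n.factorial : ℝ) ^ (2 * r) * (2 * t + (M : ℝ) * n) * P1 * P2)) * hE
end

section
/- For every integer n ≥ 1, the partial-fraction coefficients of R_n satisfy the symmetry a_{n,i,k} = (−1)^{i+1} a_{n,i,Mn−k} for all 1 ≤ i ≤ s and δ_1 n ≤ k ≤ (M−δ_1)n. Consequently ρ_{n,i} = 0 for every even i with 2 ≤ i ≤ s, and also ρ_{n,1} = 0. -/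
/-!
Under `t ↦ -Mn - t` the factor `2t + Mn` changes sign, the two Pochhammer symbols of the
numerator are exchanged up to a factor `(-1)^{rn}` each, and every factor of the denominator is
mapped to itself up to a sign that disappears in the even power `s/J`; hence `R_n` is odd about
`-Mn/2`. Partial-fraction coefficients are unique (the top-order coefficient at a pole is the limit
of `(t + k)^s R_n(t)` there), so comparing the expansions of `R_n(t)` and `-R_n(-Mn - t)` gives the
symmetry, and summing the symmetry over the symmetric range of `k` gives `ρ_{n,i} = 0` for even
`i`. Finally `t R_n(t) → 0` as `t → ∞` because `deg R_n ≤ -2`, while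
`t Σ a_{i,k}/(t+k)^i → ρ_{n,1}`.
-/

open Finset Filter Polynomial Topology

lemma sum_comp_sub_of_reflect {M : Type*} [AddCommMonoid M] {S : Finset ℕ} {N : ℕ}
    (hS : ∀ k ∈ S, k ≤ N ∧ N - k ∈ S) (f : ℕ → M) :
    ∑ k ∈ S, f (N - k) = ∑ k ∈ S, f k :=
  sum_nbij' (N - ·) (N - ·) (fun k hk => (hS k hk).2) (fun k hk => (hS k hk).2)
    (fun k hk => Nat.sub_sub_self (hS k hk).1) (fun k hk => Nat.sub_sub_self (hS k hk).1)
    fun _ _ => rfl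

lemma sum_eq_zero_of_eq_neg_comp_sub {G : Type*} [AddCommGroup G] [IsAddTorsionFree G]
    {S : Finset ℕ} {N : ℕ} (hS : ∀ k ∈ S, k ≤ N ∧ N - k ∈ S) {f : ℕ → G}
    (h : ∀ k ∈ S, f k = -f (N - k)) : ∑ k ∈ S, f k = 0 :=
  self_eq_neg.1 <| calc
    ∑ k ∈ S, f k = ∑ k ∈ S, -f (N - k) := sum_congr rfl h
    _ = -∑ k ∈ S, f k := by rw [sum_neg_distrib, sum_comp_sub_of_reflect hS]

lemma even_div_of_two_mul_dvd {J s : ℕ} (hJ : 0 < J) (h : 2 * J ∣ s) : Even (s / J) := by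
  obtain ⟨q, rfl⟩ := h
  exact ⟨q, by rw [mul_comm 2 J, mul_assoc, Nat.mul_div_cancel_left _ hJ, two_mul]⟩

lemma Icc_reflect_of_add_eq {a b N : ℕ} (h : a + b = N) :
    ∀ k ∈ Icc a b, k ≤ N ∧ N - k ∈ Icc a b := by
  intro k hk
  rw [mem_Icc] at hk ⊢
  omega

section PartialFractions

variable {𝕜 : Type*}

section Field

variable [Field 𝕜]

def partialFractionSum (s : ℕ) (S : Finset ℕ) (a : ℕ → ℕ → 𝕜) (t : 𝕜) : 𝕜 :=
  ∑ i ∈ Icc 1 s, ∑ k ∈ S, a i k / (t + k) ^ i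

lemma partialFractionSum_succ (s : ℕ) (S : Finset ℕ) (a : ℕ → ℕ → 𝕜) (t : 𝕜) :
    partialFractionSum (s + 1) S a t =
      partialFractionSum s S a t + ∑ k ∈ S, a (s + 1) k / (t + k) ^ (s + 1) :=
  sum_Icc_succ_top (by omega) _

lemma partialFractionSum_add (s : ℕ) (S : Finset ℕ) (a b : ℕ → ℕ → 𝕜) (t : 𝕜) :
    partialFractionSum s S (fun i k => a i k + b i k) t =
      partialFractionSum s S a t + partialFractionSum s S b t := by
  simp only [partialFractionSum, add_div, sum_add_distrib]

lemma partialFractionSum_neg_sub {S : Finset ℕ} {N : ℕ}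
    (hS : ∀ k ∈ S, k ≤ N ∧ N - k ∈ S) (s : ℕ) (a : ℕ → ℕ → 𝕜) (t : 𝕜) :
    partialFractionSum s S a (-N - t) =
      partialFractionSum s S (fun i k => (-1) ^ i * a i (N - k)) t := by
  refine sum_congr rfl fun i _ => ?_
  rw [← sum_comp_sub_of_reflect hS]
  refine sum_congr rfl fun k hk => ?_
  rw [Nat.cast_sub (hS k hk).1, show -(N : 𝕜) - t + (N - k) = -1 * (t + k) by ring, mul_pow,
    ← div_div, div_eq_mul_inv _ ((-1) ^ i), ← inv_pow, inv_neg_one, mul_comm]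

end Field

section Normed

variable [NontriviallyNormedField 𝕜]

lemma eventually_nhdsNE_add_ne_zero (S : Finset ℕ) (x : 𝕜) :
    ∀ᶠ t in 𝓝[≠] x, ∀ k ∈ S, t + (k : 𝕜) ≠ 0 := by
  refine (eventually_all_finset S).2 fun k _ => ?_
  simp_rw [ne_eq, add_eq_zero_iff_eq_neg]
  rcases eq_or_ne x (-k) with rfl | hx
  · exact self_mem_nhdsWithin
  · exact eventually_ne_nhdsWithin hx

lemma tendsto_pow_div_pow_nhdsNE [CharZero 𝕜] {i m : ℕ} (hi : 1 ≤ i) (him : i ≤ m) (k₀ k : ℕ) :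
    Tendsto (fun t : 𝕜 => (t + k₀) ^ m / (t + k) ^ i) (𝓝[≠] (-k₀))
      (𝓝 (if i = m ∧ k = k₀ then 1 else 0)) := by
  rcases eq_or_ne k k₀ with rfl | hk
  · have hcont : Tendsto (fun t : 𝕜 => (t + k) ^ (m - i)) (𝓝[≠] (-k)) (𝓝 ((-k + k) ^ (m - i))) :=
      (((continuous_add_const _).pow _).tendsto _).mono_left nhdsWithin_le_nhds
    have hval : (-k + k : 𝕜) ^ (m - i) = if i = m ∧ k = k then 1 else 0 := by
      rcases him.eq_or_lt with rfl | hlt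
      · simp
      · simp [hlt.ne, Nat.sub_ne_zero_of_lt hlt]
    rw [hval] at hcont
    refine hcont.congr' ?_
    filter_upwards [eventually_nhdsNE_add_ne_zero {k} (-k : 𝕜)] with t ht
    rw [pow_sub₀ _ (ht k (mem_singleton_self k)) him, div_eq_mul_inv]
  · have hden : (-k₀ + k : 𝕜) ≠ 0 := by
      rw [neg_add_eq_sub, sub_ne_zero, Ne, Nat.cast_inj]; exact hk
    have hcont : ContinuousAt (fun t : 𝕜 => (t + k₀) ^ m / (t + k) ^ i) (-k₀) :=
      ((continuous_add_const _).pow m).continuousAt.div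
        ((continuous_add_const _).pow i).continuousAt (pow_ne_zero _ hden)
    simpa [hk, zero_pow (by omega : m ≠ 0)] using hcont.tendsto.mono_left nhdsWithin_le_nhds

lemma tendsto_pow_mul_partialFractionSum [CharZero 𝕜] {s : ℕ} (hs : 1 ≤ s) {S : Finset ℕ}
    {k₀ : ℕ} (hk₀ : k₀ ∈ S) (a : ℕ → ℕ → 𝕜) :
    Tendsto (fun t => (t + k₀) ^ s * partialFractionSum s S a t) (𝓝[≠] (-k₀)) (𝓝 (a s k₀)) := by
  have hterms := tendsto_finsetSum (Icc 1 s) fun i hi => tendsto_finsetSum S fun k _ =>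
    (tendsto_pow_div_pow_nhdsNE (mem_Icc.1 hi).1 (mem_Icc.1 hi).2 k₀ k).const_mul (a i k)
  convert hterms using 2 with t
  · simp only [partialFractionSum, mul_sum, mul_div_assoc', mul_comm]
  · simp [mul_ite, ite_and, hk₀, hs]

lemma coeff_eq_zero_of_partialFractionSum_eq_zero [CharZero 𝕜] {s : ℕ} {S : Finset ℕ}
    {a : ℕ → ℕ → 𝕜} (h : ∀ t, (∀ k ∈ S, t + (k : 𝕜) ≠ 0) → partialFractionSum s S a t = 0) :
    ∀ i ∈ Icc 1 s, ∀ k ∈ S, a i k = 0 := by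
  induction s with
  | zero => simp
  | succ s ih =>
    have htop : ∀ k ∈ S, a (s + 1) k = 0 := fun k₀ hk₀ =>
      tendsto_nhds_unique (tendsto_pow_mul_partialFractionSum (by omega) hk₀ a) <|
        tendsto_const_nhds.congr' <| by
          filter_upwards [eventually_nhdsNE_add_ne_zero S (-k₀ : 𝕜)] with t ht
          rw [h t ht, mul_zero]
    have hlow : ∀ i ∈ Icc 1 s, ∀ k ∈ S, a i k = 0 := ih fun t ht => by
      have := h t ht
      rwa [partialFractionSum_succ, sum_eq_zero fun k hk => by rw [htop k hk, zero_div],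
        add_zero] at this
    intro i hi k hk
    rcases (mem_Icc.1 hi).2.eq_or_lt with rfl | hlt
    · exact htop k hk
    · exact hlow i (mem_Icc.2 ⟨(mem_Icc.1 hi).1, by omega⟩) k hk

lemma coeff_eq_neg_one_pow_mul_coeff_sub [CharZero 𝕜] {s N : ℕ} {S : Finset ℕ}
    (hS : ∀ k ∈ S, k ≤ N ∧ N - k ∈ S) {f : 𝕜 → 𝕜} {a : ℕ → ℕ → 𝕜}
    (hf : ∀ t, (∀ k ∈ S, t + (k : 𝕜) ≠ 0) → f t = partialFractionSum s S a t)
    (hodd : ∀ t, f (-N - t) = -f t) :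
    ∀ i ∈ Icc 1 s, ∀ k ∈ S, a i k = (-1) ^ (i + 1) * a i (N - k) := by
  have hzero := coeff_eq_zero_of_partialFractionSum_eq_zero
    (a := fun i k => a i k + (-1) ^ i * a i (N - k)) fun t ht => by
      have ht' : ∀ k ∈ S, -N - t + (k : 𝕜) ≠ 0 := fun k hk => by
        have := ht (N - k) (hS k hk).2
        rw [Nat.cast_sub (hS k hk).1] at this
        contrapose! this
        linear_combination -this
      rw [partialFractionSum_add, ← partialFractionSum_neg_sub hS, ← hf t ht, ← hf _ ht', hodd,
        add_neg_cancel]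
  intro i hi k hk
  linear_combination hzero i hi k hk

end Normed

end PartialFractions

lemma tendsto_div_add_pow_atTop (c : ℝ) {i : ℕ} (hi : 1 ≤ i) :
    Tendsto (fun t : ℝ => t / (t + c) ^ i) atTop (𝓝 (if i = 1 then 1 else 0)) := by
  rcases hi.eq_or_lt with rfl | hlt
  · have h := div_tendsto_atTop_leadingCoeff_div_of_degree_eq (X : ℝ[X]) (X + C c)
      (by rw [degree_X, degree_X_add_C])
    rw [leadingCoeff_X, (monic_X_add_C c).leadingCoeff, div_one] at h
    simpa using h
  · have hdeg : (X : ℝ[X]).degree < ((X + C c) ^ i).degree := by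
      apply degree_lt_degree
      rw [natDegree_X, natDegree_pow, natDegree_X_add_C, mul_one]
      exact hlt
    simpa [hlt.ne'] using div_tendsto_atTop_zero_of_degree_lt _ _ hdeg

lemma tendsto_mul_partialFractionSum_atTop {s : ℕ} (hs : 1 ≤ s) (S : Finset ℕ)
    (a : ℕ → ℕ → ℝ) :
    Tendsto (fun t => t * partialFractionSum s S a t) atTop (𝓝 (∑ k ∈ S, a 1 k)) := by
  have hterms := tendsto_finsetSum (Icc 1 s) fun i hi => tendsto_finsetSum S fun k _ =>
    (tendsto_div_add_pow_atTop k (mem_Icc.1 hi).1).const_mul (a i k)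
  convert hterms using 2 with t
  · simp only [partialFractionSum, mul_sum, mul_div_assoc', mul_comm]
  · simp [hs]

lemma poch_succ (x : ℝ) (k : ℕ) : poch x (k + 1) = poch x k * (x + k) :=
  prod_range_succ _ _

lemma poch_eq_eval_ascPochhammer (x : ℝ) (k : ℕ) : poch x k = (ascPochhammer ℝ k).eval x := by
  induction k with
  | zero => simp [poch]
  | succ k ih => rw [poch_succ, ascPochhammer_succ_eval, ih]

lemma poch_one_sub_sub (x : ℝ) (k : ℕ) : poch (1 - x - k) k = (-1) ^ k * poch x k := by
  calc poch (1 - x - k) k = ∏ m ∈ range k, (1 - x - k + ((k - 1 - m : ℕ) : ℝ)) :=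
        (prod_range_reflect _ k).symm
    _ = ∏ m ∈ range k, (-1) * (x + m) := prod_congr rfl fun m hm => by
        rw [Nat.sub_sub, Nat.cast_sub (by simp at hm; omega)]; push_cast; ring
    _ = (-1) ^ k * poch x k := by rw [prod_mul_distrib, prod_const, card_range, poch]

lemma Rfun_neg_sub (J M : ℕ) (δ : ℕ → ℕ) (hδM : ∀ j ∈ Icc 1 J, 2 * δ j ≤ M) (s r n : ℕ)
    (hsJ : Even (s / J)) (t : ℝ) :
    Rfun J M δ s r n (-(M * n) - t) = -Rfun J M δ s r n t := by
  have hAB : poch (-(M * n) - t - r * n) (r * n) * poch (-(M * n) - t + M * n + 1) (r * n) =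
      poch (t - r * n) (r * n) * poch (t + M * n + 1) (r * n) := by
    have hA : poch (-(M * n) - t - r * n) (r * n) =
        (-1) ^ (r * n) * poch (t + M * n + 1) (r * n) := by
      rw [← poch_one_sub_sub]; push_cast; ring_nf
    have hB : poch (-(M * n) - t + M * n + 1) (r * n) =
        (-1) ^ (r * n) * poch (t - r * n) (r * n) := by
      rw [← poch_one_sub_sub]; push_cast; ring_nf
    rw [hA, hB, mul_mul_mul_comm, ← pow_add, Even.neg_one_pow ⟨_, rfl⟩, one_mul, mul_comm]
  have hD (j) (hj : j ∈ Icc 1 J) :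
      poch (-(M * n) - t + δ j * n) ((M - 2 * δ j) * n + 1) ^ (s / J) =
        poch (t + δ j * n) ((M - 2 * δ j) * n + 1) ^ (s / J) := by
    have harg :
        (-(M * n) - t + δ j * n : ℝ) = 1 - (t + δ j * n) - ((M - 2 * δ j) * n + 1 : ℕ) := by
      rw [Nat.cast_add, Nat.cast_mul, Nat.cast_sub (hδM j hj)]; push_cast; ring
    rw [harg, poch_one_sub_sub, mul_pow, ← pow_mul, (hsJ.mul_left _).neg_one_pow, one_mul]
  unfold Rfun
  rw [mul_assoc _ (poch _ _), hAB, prod_congr rfl hD]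
  ring

lemma eval_ascPochhammer_comp_X_add_C (c t : ℝ) (k : ℕ) :
    ((ascPochhammer ℝ k).comp (X + C c)).eval t = poch (t + c) k := by
  rw [eval_comp, poch_eq_eval_ascPochhammer, eval_add, eval_X, eval_C]

lemma natDegree_ascPochhammer_comp_X_add_C (c : ℝ) (k : ℕ) :
    ((ascPochhammer ℝ k).comp (X + C c)).natDegree = k := by
  rw [natDegree_comp, ascPochhammer_natDegree, natDegree_X_add_C, mul_one]

lemma tendsto_mul_Rfun_atTop (J M : ℕ) (δ : ℕ → ℕ) (s r n : ℕ)
    (hdeg : 2 * (r * n) + 2 < s / J * ∑ j ∈ Icc 1 J, ((M - 2 * δ j) * n + 1)) :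
    Tendsto (fun t => t * Rfun J M δ s r n t) atTop (𝓝 0) := by
  let A (c : ℝ) (k : ℕ) : ℝ[X] := (ascPochhammer ℝ k).comp (X + C c)
  let P : ℝ[X] := X * (C 2 * X + C ((M : ℝ) * n)) * A (-(r * n)) (r * n) * A (M * n + 1) (r * n)
  let Q : ℝ[X] := ∏ j ∈ Icc 1 J, A (δ j * n) ((M - 2 * δ j) * n + 1) ^ (s / J)
  have hP : P.natDegree ≤ 2 * (r * n) + 2 := by
    calc P.natDegree ≤ 1 + 1 + r * n + r * n := by
          refine natDegree_mul_le.trans (add_le_add (natDegree_mul_le.trans (add_le_add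
            (natDegree_mul_le.trans (add_le_add natDegree_X_le natDegree_linear_le))
            (natDegree_ascPochhammer_comp_X_add_C _ _).le))
            (natDegree_ascPochhammer_comp_X_add_C _ _).le)
      _ = 2 * (r * n) + 2 := by ring
  have hQ : Q.natDegree = s / J * ∑ j ∈ Icc 1 J, ((M - 2 * δ j) * n + 1) := by
    rw [natDegree_prod_of_monic _ _ fun j _ => ((monic_ascPochhammer ℝ _).comp_X_add_C _).pow _,
      mul_sum]
    simp only [natDegree_pow, natDegree_ascPochhammer_comp_X_add_C]
  have hPQ : P.degree < Q.degree := degree_lt_degree (hQ ▸ hP.trans_lt hdeg)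
  have hlim := (div_tendsto_atTop_zero_of_degree_lt P Q hPQ).const_mul
    ((∏ j ∈ Icc 1 J, (((M - 2 * δ j) * n).factorial : ℝ) ^ (s / J)) /
      (n.factorial : ℝ) ^ (2 * r))
  rw [mul_zero] at hlim
  refine hlim.congr fun t => ?_
  simp only [P, Q, A, eval_mul, eval_X, eval_add, eval_C, eval_prod, eval_pow,
    eval_ascPochhammer_comp_X_add_C, Rfun, ← sub_eq_add_neg, ← add_assoc]
  ring

theorem partial_fraction_coefficients_symmetry_general
    (J M : ℕ) (δ : ℕ → ℕ) (hJ : 1 ≤ J)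
    (hδM : ∀ j ∈ Finset.Icc 1 J, 2 * δ j < M)
    (s : ℕ) (hs : 0 < s) (hsJ : 2 * J ∣ s)
    (r : ℕ)
    (hdeg : ∀ n : ℕ, 1 ≤ n →
      (1 + 2 * (r * n) + 2 : ℤ) ≤
        ((s / J : ℕ) : ℤ) * ∑ j ∈ Finset.Icc 1 J, (((M - 2 * δ j) * n + 1 : ℕ) : ℤ))
    (n : ℕ) (hn : 1 ≤ n) (a : ℕ → ℕ → ℚ)
    (ha : ∀ t : ℝ, (∀ k ∈ Finset.Icc (δ 1 * n) ((M - δ 1) * n), t + (k : ℝ) ≠ 0) →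
      Rfun J M δ s r n t =
        ∑ i ∈ Finset.Icc 1 s, ∑ k ∈ Finset.Icc (δ 1 * n) ((M - δ 1) * n),
          (a i k : ℝ) / (t + (k : ℝ)) ^ i) :
    (∀ i ∈ Finset.Icc 1 s, ∀ k ∈ Finset.Icc (δ 1 * n) ((M - δ 1) * n),
        a i k = (-1) ^ (i + 1) * a i (M * n - k)) ∧
      (∀ i ∈ Finset.Icc 1 s, Even i →
        ∑ k ∈ Finset.Icc (δ 1 * n) ((M - δ 1) * n), a i k = 0) ∧
      ∑ k ∈ Finset.Icc (δ 1 * n) ((M - δ 1) * n), a 1 k = 0 := by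
  set S := Icc (δ 1 * n) ((M - δ 1) * n)
  have hδ1 : δ 1 ≤ M := by have := hδM 1 (left_mem_Icc.2 hJ); omega
  have hS : ∀ k ∈ S, k ≤ M * n ∧ M * n - k ∈ S :=
    Icc_reflect_of_add_eq (by rw [← add_mul, Nat.add_sub_cancel' hδ1])
  have hsymm : ∀ i ∈ Icc 1 s, ∀ k ∈ S, a i k = (-1) ^ (i + 1) * a i (M * n - k) := by
    have hodd (t : ℝ) : Rfun J M δ s r n (-((M * n : ℕ) : ℝ) - t) = -Rfun J M δ s r n t := by
      push_cast
      exact Rfun_neg_sub J M δ (fun j hj => (hδM j hj).le) s r n (even_div_of_two_mul_dvd hJ hsJ) t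
    exact_mod_cast coeff_eq_neg_one_pow_mul_coeff_sub hS ha hodd
  refine ⟨hsymm, fun i hi hie => sum_eq_zero_of_eq_neg_comp_sub hS fun k hk => ?_, ?_⟩
  · rw [hsymm i hi k hk, hie.add_one.neg_one_pow, neg_one_mul]
  · have hdeg' : 2 * (r * n) + 2 < s / J * ∑ j ∈ Icc 1 J, ((M - 2 * δ j) * n + 1) := by
      have := hdeg n hn
      push_cast at this ⊢
      linarith
    have hev : (fun t => t * Rfun J M δ s r n t) =ᶠ[atTop]
        fun t => t * partialFractionSum s S (fun i k => (a i k : ℝ)) t := by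
      filter_upwards [eventually_gt_atTop 0] with t ht
      rw [ha t fun k _ => by positivity]
      rfl
    exact_mod_cast tendsto_nhds_unique (tendsto_mul_partialFractionSum_atTop hs S _)
      ((tendsto_mul_Rfun_atTop J M δ s r n hdeg').congr' hev)

/-- **Symmetry of the partial-fraction coefficients.** For every `n ≥ 1`,
`aₙ,ᵢ,ₖ = (-1)^{i+1} aₙ,ᵢ,Mn-k` for all `1 ≤ i ≤ s` and `δ₁n ≤ k ≤ (M-δ₁)n`.  Consequently
`ρₙ,ᵢ = 0` for every even `i` with `2 ≤ i ≤ s`, and also `ρₙ,₁ = 0`. -/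
theorem partial_fraction_coefficients_symmetry
    (J M : ℕ) (δ : ℕ → ℕ) (hJ : 1 ≤ J) (hM : 1 ≤ M)
    (hδ : ∀ i ∈ Finset.Icc 1 J, ∀ j ∈ Finset.Icc 1 J, i ≤ j → δ i ≤ δ j)
    (hδM : ∀ j ∈ Finset.Icc 1 J, 2 * δ j < M)
    (s : ℕ) (hs : 0 < s) (hsJ : 2 * J ∣ s)
    (r : ℕ) (hr : r = ⌊(s : ℝ) / Real.log s ^ 2⌋₊)
    (hdeg : ∀ n : ℕ, 1 ≤ n →
      (1 + 2 * (r * n) + 2 : ℤ) ≤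
        ((s / J : ℕ) : ℤ) * ∑ j ∈ Finset.Icc 1 J, (((M - 2 * δ j) * n + 1 : ℕ) : ℤ))
    (n : ℕ) (hn : 1 ≤ n) (a : ℕ → ℕ → ℚ)
    (ha : ∀ t : ℝ, (∀ k ∈ Finset.Icc (δ 1 * n) ((M - δ 1) * n), t + (k : ℝ) ≠ 0) →
      Rfun J M δ s r n t =
        ∑ i ∈ Finset.Icc 1 s, ∑ k ∈ Finset.Icc (δ 1 * n) ((M - δ 1) * n),
          (a i k : ℝ) / (t + (k : ℝ)) ^ i) :
    (∀ i ∈ Finset.Icc 1 s, ∀ k ∈ Finset.Icc (δ 1 * n) ((M - δ 1) * n),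
        a i k = (-1) ^ (i + 1) * a i (M * n - k)) ∧
      (∀ i ∈ Finset.Icc 1 s, Even i →
        ∑ k ∈ Finset.Icc (δ 1 * n) ((M - δ 1) * n), a i k = 0) ∧
      ∑ k ∈ Finset.Icc (δ 1 * n) ((M - δ 1) * n), a 1 k = 0 :=
  partial_fraction_coefficients_symmetry_general J M δ hJ hδM s hs hsJ r hdeg n hn a ha
end

section
/- Let a, m be integers with m ≥ 0 and let F(t) = (t+a)_m / m!. Then for every integer k and every integer λ ≥ 0, the rational number D_m^λ · (1/λ!) · F^{(λ)}(t)|_{t=−k} is an integer, where F^{(λ)} denotes the λ-th derivative of F. -/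
/-!
Write `x^{(m)} = x(x-1)⋯(x-m+1)` (`descPochhammer`). Since `(t + a)_m = (t + a + m - 1)^{(m)}`,
shifting by `-k` shows that `F^{(λ)}(-k) / λ!` is `1/m!` times the coefficient of `X^λ` in
`(X + N)^{(m)}`, `N = a - k + m - 1`. By Chu–Vandermonde,
`(X + N)^{(m)} = ∑_{i+j=m} C(m,i) X^{(i)} N^{(j)}`, and `m! = C(m,i) i! j!` with `j! ∣ N^{(j)}`.
It remains that `i! ∣ D_i^λ [X^λ] X^{(i)}`: up to sign that coefficient is a sum of products `∏ t`
over `(i-λ)`-subsets `t ⊆ {1,…,i-1}`, and `i! = ∏ t · ∏ ({1,…,i} \ t)`, where the second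
product has `λ` factors, each dividing `D_i`.
-/

open Polynomial Finset Nat

theorem Finset.prod_dvd_pow_card_sdiff_mul_prod {ι M : Type*} [CommMonoid M] [DecidableEq ι]
    {s t : Finset ι} {f : ι → M} {d : M} (hts : t ⊆ s) (hd : ∀ i ∈ s \ t, f i ∣ d) :
    ∏ i ∈ s, f i ∣ d ^ #(s \ t) * ∏ i ∈ t, f i := by
  rw [← prod_sdiff hts, ← prod_const]
  exact mul_dvd_mul_right (prod_dvd_prod_of_dvd _ _ hd) _

theorem descPochhammer_eq_prod_range (R : Type*) [CommRing R] (n : ℕ) :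
    descPochhammer R n = ∏ j ∈ range n, (X - (j : R[X])) := by
  induction n with
  | zero => simp
  | succ n ih => rw [descPochhammer_succ_right, ih, prod_range_succ]

theorem factorial_dvd_lcm_pow_mul_coeff_descPochhammer (j lam : ℕ) :
    (j ! : ℤ) ∣ ((Icc 1 j).lcm id : ℕ) ^ lam * (descPochhammer ℤ j).coeff lam := by
  obtain hlam | hlam := lt_or_ge j lam
  · rw [coeff_eq_zero_of_natDegree_lt (by rwa [descPochhammer_natDegree]), mul_zero]
    exact dvd_zero _
  have hprod : descPochhammer ℤ j = ∏ i ∈ range j, (X + C (-(i : ℤ))) := by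
    simp only [descPochhammer_eq_prod_range, C_neg, ← sub_eq_add_neg, map_natCast]
  rw [hprod, prod_X_add_C_coeff _ _ (by simpa using hlam), mul_sum]
  refine dvd_sum fun t ht => ?_
  rw [mem_powersetCard, card_range] at ht
  by_cases h0 : 0 ∈ t
  · rw [prod_eq_zero h0 (by simp), mul_zero]
    exact dvd_zero _
  have hts : t ⊆ Ico 1 (j + 1) := fun i hi => by
    have hij : i < j := mem_range.mp (ht.1 hi)
    have hi0 : i ≠ 0 := fun h => h0 (h ▸ hi)
    simp only [mem_Ico]; omega
  have hcard : #(Ico 1 (j + 1) \ t) = lam := by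
    rw [card_sdiff_of_subset hts, ht.2, Nat.card_Ico]; omega
  have hdvd := prod_dvd_pow_card_sdiff_mul_prod (f := fun i => i) (d := (Icc 1 j).lcm id) hts
    fun i hi => dvd_lcm (by simpa [mem_Ico, mem_Icc, Nat.lt_succ_iff] using (mem_sdiff.mp hi).1)
  rw [prod_Ico_id_eq_factorial, hcard] at hdvd
  have hdvd_int : (j ! : ℤ) ∣ ((Icc 1 j).lcm id : ℕ) ^ lam * ∏ i ∈ t, (i : ℤ) := by
    simpa using Int.natCast_dvd_natCast.mpr hdvd
  rw [prod_neg, mul_left_comm]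
  exact hdvd_int.mul_left _

theorem taylor_descPochhammer (N : ℤ) (m : ℕ) :
    taylor N (descPochhammer ℤ m) = ∑ ij ∈ antidiagonal m,
      C ((m.choose ij.1 : ℤ) * (descPochhammer ℤ ij.2).eval N) * descPochhammer ℤ ij.1 := by
  rw [taylor_apply, comp_eq_aeval, aeval_eq_smeval,
    Ring.descPochhammer_smeval_add _ (commute_X _)]
  refine sum_congr rfl fun ij _ => ?_
  have hC : aeval (C N) (descPochhammer ℤ ij.2) = C ((descPochhammer ℤ ij.2).eval N) :=
    aeval_algebraMap_apply_eq_algebraMap_eval N _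
  rw [← aeval_eq_smeval, ← aeval_eq_smeval, aeval_X_left_apply, hC, map_mul, map_natCast]
  ring

theorem factorial_dvd_eval_descPochhammer (N : ℤ) (j : ℕ) :
    (j ! : ℤ) ∣ (descPochhammer ℤ j).eval N :=
  ⟨Ring.choose N j, by rw [eval_eq_smeval, Ring.descPochhammer_eq_factorial_smul_choose, nsmul_eq_mul]⟩

theorem factorial_dvd_lcm_pow_mul_coeff_taylor_descPochhammer (N : ℤ) (m lam : ℕ) :
    (m ! : ℤ) ∣ ((Icc 1 m).lcm id : ℕ) ^ lam * (taylor N (descPochhammer ℤ m)).coeff lam := by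
  rw [taylor_descPochhammer, finsetSum_coeff, mul_sum]
  refine dvd_sum fun ij hij => ?_
  obtain ⟨i, j⟩ := ij
  rw [HasAntidiagonal.mem_antidiagonal] at hij
  subst hij
  have hlcm : ((Icc 1 i).lcm id : ℕ) ∣ (Icc 1 (i + j)).lcm id :=
    lcm_mono (Icc_subset_Icc le_rfl (by omega))
  have hcoeff : (i ! : ℤ) ∣ ((Icc 1 (i + j)).lcm id : ℕ) ^ lam * (descPochhammer ℤ i).coeff lam :=
    (factorial_dvd_lcm_pow_mul_coeff_descPochhammer i lam).trans
      (mul_dvd_mul_right (pow_dvd_pow_of_dvd (Int.natCast_dvd_natCast.mpr hlcm) _) _)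
  rw [← add_choose_mul_factorial_mul_factorial, ← choose_symm_add, coeff_C_mul]
  push_cast
  calc ((i + j).choose i * i ! * j ! : ℤ)
      ∣ (i + j).choose i * (((Icc 1 (i + j)).lcm id : ℕ) ^ lam * (descPochhammer ℤ i).coeff lam)
          * (descPochhammer ℤ j).eval N :=
        mul_dvd_mul (mul_dvd_mul_left _ hcoeff) (factorial_dvd_eval_descPochhammer N j)
    _ = _ := by ring

theorem iteratedDeriv_eval_eq_factorial_mul_coeff_taylor {𝕜 : Type*} [NontriviallyNormedField 𝕜]
    (p : 𝕜[X]) (n : ℕ) (x : 𝕜) :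
    iteratedDeriv n (fun t => p.eval t) x = n ! * (taylor x p).coeff n := by
  have hiter : ∀ n, iteratedDeriv n (fun t => p.eval t) = fun t => (derivative^[n] p).eval t := by
    intro n
    induction n with
    | zero => simp
    | succ n ih =>
      rw [iteratedDeriv_succ, ih, Function.iterate_succ_apply']
      exact funext fun t => Polynomial.deriv _
  rw [hiter, taylor_coeff, ← factorial_smul_hasseDeriv]
  simp [nsmul_eq_mul]

theorem poch_eq_eval_descPochhammer (x : ℝ) (m : ℕ) :
    poch x m = (descPochhammer ℝ m).eval (x + m - 1) := by
  rw [descPochhammer_eval_eq_ascPochhammer, show x + m - 1 - m + 1 = x by ring]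
  induction m with
  | zero => simp [poch]
  | succ m ih =>
    simp only [poch] at ih ⊢
    rw [prod_range_succ, ih, ascPochhammer_succ_eval]

/-- **Lemma (numerator-type elementary bricks).** For `F(t) = (t+a)_m / m!` and any integer `k`
and any `λ ≥ 0`, the number `D_m^λ · (1/λ!) · F^{(λ)}(-k)` is an integer, where
`D_m = lcm(1,2,…,m)`. -/
theorem brick_numerator_integrality (a : ℤ) (m : ℕ) (k : ℤ) (lam : ℕ) :
    ∃ z : ℤ,
      (((Finset.Icc 1 m).lcm id : ℕ) : ℝ) ^ lam * (1 / (lam.factorial : ℝ)) *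
        iteratedDeriv lam (fun t : ℝ => poch (t + (a : ℝ)) m / (m.factorial : ℝ)) (-(k : ℝ))
      = (z : ℝ) := by
  obtain ⟨z, hz⟩ := factorial_dvd_lcm_pow_mul_coeff_taylor_descPochhammer (a - k + m - 1) m lam
  refine ⟨z, ?_⟩
  have hF : (fun t : ℝ => poch (t + a) m / m !) =
      fun t => ((m ! : ℝ)⁻¹ • taylor ((a + m - 1 : ℤ) : ℝ) (descPochhammer ℝ m)).eval t := by
    funext t
    rw [eval_smul, taylor_eval, poch_eq_eval_descPochhammer, smul_eq_mul, div_eq_inv_mul]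
    push_cast
    ring_nf
  have hshift : -(k : ℝ) + ((a + m - 1 : ℤ) : ℝ) = Int.castRingHom ℝ (a - k + m - 1) := by
    rw [eq_intCast]; push_cast; ring
  rw [hF, iteratedDeriv_eval_eq_factorial_mul_coeff_taylor, LinearMap.map_smul, taylor_taylor,
    coeff_smul, hshift, ← descPochhammer_map (Int.castRingHom ℝ), ← map_taylor, coeff_map,
    smul_eq_mul]
  have hzR := congrArg (Int.cast : ℤ → ℝ) hz
  push_cast at hzR ⊢
  field_simp
  linear_combination hzR
end

section
/- Let a, b, m be integers with 0 ≤ a ≤ b ≤ m and let G(t) = (b−a)! / (t+a)_{b−a+1}. Then for every prime number p with p > √m, every integer k with 0 ≤ k ≤ m, and every integer λ ≥ 0, the p-adic valuation of the rational number (G(t)·(t+k))^{(λ)}|_{t=−k} satisfies v_p( (G(t)(t+k))^{(λ)}|_{t=−k} ) ≥ −λ + ⌊(b−a)/p⌋ − ⌊(k−a)/p⌋ − ⌊(b−k)/p⌋. -/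
/-
Put `n = b - a` and `dⱼ = a + j - k`. Partial fractions (the `n`-th forward difference of `1/x`)
give `n! / (t+a)_{n+1} = ∑ⱼ (-1)^j C(n,j) / (t+a+j)`, so near `t = -k` the regular extension
is `∑ⱼ (-1)^j C(n,j) (1 - dⱼ / (t+k+dⱼ))`, and its `λ`-th derivative at `-k` is the rational number
`∑ⱼ (-1)^j C(n,j) ρ(dⱼ, λ)`, where `ρ(0, λ) = [λ = 0]` and `ρ(d, λ) = [λ = 0] - (-1)^λ λ! / d^λ` for
`d ≠ 0`.

Since `|dⱼ| ≤ m < p²`, `v_p(dⱼ) ≤ 1`, and Legendre's formula below `p²` has a single term, so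
`v_p C(n,j) = ⌊n/p⌋ - ⌊j/p⌋ - ⌊(n-j)/p⌋`. If `p ∣ dⱼ`, then `j ≡ k - a` and `n - j ≡ b - k (mod p)`,
so this is the carry `δ = ⌊n/p⌋ - ⌊(k-a)/p⌋ - ⌊(b-k)/p⌋ ∈ {0, 1}` and the term has valuation
`≥ δ - λ`. If `p ∤ dⱼ`, the term is `p`-integral and vanishes for `λ = 0`, so its valuation is
`≥ 0 ≥ δ - λ`. The ultrametric inequality bounds the sum.
-/

open Finset Filter Topology Nat

section PartialFractions

variable {K : Type*} [Field K]

theorem fwdDiff_iter_inv (n : ℕ) (x : K) (hx : ∀ i ≤ n, x + i ≠ 0) :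
    (fwdDiff 1)^[n] (·⁻¹) x = (-1) ^ n * n ! / ∏ i ∈ range (n + 1), (x + i) := by
  induction n generalizing x with
  | zero => simp
  | succ n ih =>
    have hx' : ∀ i ≤ n, x + 1 + i ≠ 0 := fun i hi => by
      simpa [add_assoc, add_comm (1 : K)] using hx (i + 1) (by omega)
    have hP : ∏ i ∈ range (n + 1), (x + i) ≠ 0 :=
      prod_ne_zero_iff.2 fun i hi => hx i ((mem_range_succ_iff.1 hi).trans n.le_succ)
    have hP' : ∏ i ∈ range (n + 1), (x + 1 + i) ≠ 0 :=
      prod_ne_zero_iff.2 fun i hi => hx' i (mem_range_succ_iff.1 hi)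
    have hfirst : x ≠ 0 := by simpa using hx 0 (by omega)
    have hlast : x + (n + 1 : ℕ) ≠ 0 := hx (n + 1) le_rfl
    have hshift : ∏ i ∈ range (n + 1 + 1), (x + i) = x * ∏ i ∈ range (n + 1), (x + 1 + i) := by
      rw [prod_range_succ']
      simp [add_assoc, add_comm (1 : K), mul_comm]
    have hpeel := prod_range_succ (fun i : ℕ => x + i) (n + 1)
    rw [hshift] at hpeel
    rw [Function.iterate_succ_apply', fwdDiff, ih x fun i hi => hx i (by omega), ih (x + 1) hx',
      hshift]
    push_cast [factorial_succ] at hpeel hlast ⊢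
    field_simp
    linear_combination -(-1) ^ n * (n ! : K) * hpeel

theorem factorial_div_prod_eq_sum (n : ℕ) (x : K) (hx : ∀ i ≤ n, x + i ≠ 0) :
    n ! / ∏ i ∈ range (n + 1), (x + i) = ∑ j ∈ range (n + 1), (-1) ^ j * n.choose j / (x + j) := by
  have hsq : ∀ i, (-1 : K) ^ i * (-1) ^ i = 1 := fun i => by rw [← mul_pow]; norm_num
  have h := fwdDiff_iter_inv n x hx
  rw [fwdDiff_iter_eq_sum_shift] at h
  calc (n ! : K) / ∏ i ∈ range (n + 1), (x + i)
      = (-1) ^ n * ((-1) ^ n * n ! / ∏ i ∈ range (n + 1), (x + i)) := by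
        rw [mul_div_assoc, ← mul_assoc, hsq, one_mul]
    _ = _ := by
      rw [← h, mul_sum]
      refine sum_congr rfl fun j hj => ?_
      have hsign : (-1 : K) ^ n * (-1) ^ (n - j) = (-1) ^ j := by
        rw [← Nat.sub_add_cancel (mem_range_succ_iff.1 hj), pow_add, Nat.add_sub_cancel,
          mul_right_comm, hsq, one_mul]
      rw [zsmul_eq_mul, nsmul_one, ← hsign]
      push_cast
      ring

end PartialFractions

/-- `iteratedDeriv l (fun s ↦ s / (s + d)) 0` for `d ≠ 0`, via `s / (s + d) = 1 - d * (s + d)⁻¹`.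
At `d = 0` it is the derivative of that right-hand side, the constant `1` (as `0 * 0⁻¹ = 0`). -/
def ratioIterDeriv {K : Type*} [Field K] (d : K) (l : ℕ) : K :=
  (if l = 0 then 1 else 0) - d * ((-1) ^ l * l ! * d ^ (-1 - l : ℤ))

theorem ratioIterDeriv_of_ne_zero {K : Type*} [Field K] {d : K} (hd : d ≠ 0) (l : ℕ) :
    ratioIterDeriv d l = (if l = 0 then 1 else 0) - (-1) ^ l * l ! * (d ^ l)⁻¹ := by
  rw [ratioIterDeriv, show (-1 - l : ℤ) = -(l + 1 : ℕ) by push_cast; ring, zpow_neg, zpow_natCast,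
    pow_succ]
  field_simp

@[simp, norm_cast]
theorem Rat.cast_ratioIterDeriv {K : Type*} [Field K] [CharZero K] (d : ℚ) (l : ℕ) :
    ((ratioIterDeriv d l : ℚ) : K) = ratioIterDeriv (d : K) l := by
  simp [ratioIterDeriv, apply_ite]

section Derivatives

variable {𝕜 : Type*} [NontriviallyNormedField 𝕜]

theorem iteratedDeriv_one_sub_mul_inv (d c : 𝕜) (l : ℕ) :
    iteratedDeriv l (fun t => 1 - d * (t + c + d)⁻¹) (-c) = ratioIterDeriv d l := by
  rcases l with _ | l
  · simp [ratioIterDeriv]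
  · have h := iter_deriv_inv_linear (l + 1) (1 : 𝕜) (c + d)
    simp only [one_mul, one_pow, ← add_assoc] at h
    rw [iteratedDeriv_const_sub l.succ_pos, iteratedDeriv_neg, iteratedDeriv_const_mul_field,
      iteratedDeriv_eq_iterate, h, ratioIterDeriv]
    simp

theorem contDiffAt_one_sub_mul_inv (d c : 𝕜) (n : WithTop ℕ∞) :
    ContDiffAt 𝕜 n (fun t => 1 - d * (t + c + d)⁻¹) (-c) := by
  rcases eq_or_ne d 0 with rfl | hd
  · simpa using contDiffAt_const
  · fun_prop (disch := simpa)

end Derivatives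

theorem eventually_nhdsNE_ne {X : Type*} [TopologicalSpace X] [T1Space X] (x y : X) :
    ∀ᶠ z in 𝓝[≠] x, z ≠ y := by
  rcases eq_or_ne x y with rfl | h
  · exact self_mem_nhdsWithin
  · exact nhdsWithin_le_nhds (eventually_ne_nhds h)

theorem factorial_mul_div_poch_eq_sum (n : ℕ) (a c t : ℝ) (ht : ∀ i ≤ n, t + a + i ≠ 0) :
    n ! * (t + c) / poch (t + a) (n + 1) =
      ∑ j ∈ range (n + 1), (-1) ^ j * n.choose j * (1 - (a + j - c) * (t + c + (a + j - c))⁻¹) := by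
  rw [mul_comm, mul_div_assoc, poch, factorial_div_prod_eq_sum n _ ht, mul_sum]
  refine sum_congr rfl fun j hj => ?_
  have := ht j (mem_range_succ_iff.1 hj)
  rw [show t + c + (a + j - c) = t + a + j by ring]
  field_simp
  ring

theorem iteratedDeriv_eq_sum_ratioIterDeriv (n : ℕ) (a c : ℝ) {h : ℝ → ℝ}
    (hagree : ∀ t ≠ -c, h t = n ! * (t + c) / poch (t + a) (n + 1))
    (hcont : ContinuousAt h (-c)) (l : ℕ) :
    iteratedDeriv l h (-c) =
      ∑ j ∈ range (n + 1), (-1) ^ j * n.choose j * ratioIterDeriv (a + j - c) l := by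
  set H : ℝ → ℝ := fun t =>
    ∑ j ∈ range (n + 1), (-1) ^ j * n.choose j * (1 - (a + j - c) * (t + c + (a + j - c))⁻¹)
  have hsmooth : ∀ j ∈ range (n + 1), ContDiffAt ℝ l
      (fun t => (-1) ^ j * n.choose j * (1 - (a + j - c) * (t + c + (a + j - c))⁻¹)) (-c) :=
    fun j _ => contDiffAt_const.mul (contDiffAt_one_sub_mul_inv _ _ _)
  have hpunct : h =ᶠ[𝓝[≠] (-c)] H := by
    have hroots : ∀ᶠ t in 𝓝[≠] (-c), ∀ i ∈ Set.Iic n, t + a + i ≠ 0 := by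
      refine (eventually_all_finite (Set.finite_Iic n)).2 fun i _ => ?_
      filter_upwards [eventually_nhdsNE_ne (-c) (-(a + i))] with t ht
      contrapose! ht
      linear_combination ht
    filter_upwards [hroots, self_mem_nhdsWithin] with t ht htc
    exact (hagree t htc).trans (factorial_mul_div_poch_eq_sum n a c t ht)
  have hH : ContinuousAt H (-c) := (ContDiffAt.sum hsmooth).continuousAt
  rw [((hcont.eventuallyEq_nhds_iff_eventuallyEq_nhdsNE hH).1 hpunct).iteratedDeriv_eq,
    iteratedDeriv_fun_sum hsmooth]
  refine sum_congr rfl fun j _ => ?_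
  rw [iteratedDeriv_const_mul_field, iteratedDeriv_one_sub_mul_inv]

theorem padicValRat_neg_one_pow_mul (p e : ℕ) (q : ℚ) :
    padicValRat p ((-1) ^ e * q) = padicValRat p q := by
  rcases neg_one_pow_eq_or ℚ e with h | h <;> simp [h, padicValRat.neg]

theorem padicValInt_le_one_of_natAbs_lt_sq {p : ℕ} {d : ℤ} (hd : d.natAbs < p ^ 2) :
    padicValInt p d ≤ 1 := by
  rcases eq_or_ne d 0 with rfl | hd0
  · simp
  by_contra! h
  have h2 : 2 ≤ padicValInt p d := h
  have := Nat.le_of_dvd (Int.natAbs_pos.2 hd0)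
    ((pow_dvd_pow p h2).trans (pow_padicValNat_dvd (n := d.natAbs)))
  omega

section Valuation

variable {p : ℕ} [hp : Fact p.Prime]

theorem padicValNat_factorial_of_lt_sq {n : ℕ} (hn : n < p ^ 2) : padicValNat p n ! = n / p := by
  rw [padicValNat_factorial (Nat.log_lt_of_lt_pow' two_ne_zero hn)]
  simp

theorem padicValNat_choose_add_div_add_div {n j : ℕ} (hn : n < p ^ 2) (hj : j ≤ n) :
    padicValNat p (n.choose j) + j / p + (n - j) / p = n / p := by
  have h := congrArg (padicValNat p) (choose_mul_factorial_mul_factorial hj)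
  rwa [padicValNat.mul (mul_ne_zero (choose_pos hj).ne' (factorial_ne_zero _))
      (factorial_ne_zero _), padicValNat.mul (choose_pos hj).ne' (factorial_ne_zero _),
    padicValNat_factorial_of_lt_sq (by omega), padicValNat_factorial_of_lt_sq (by omega),
    padicValNat_factorial_of_lt_sq hn] at h

theorem padicValNat_choose_eq_floor {n j : ℕ} (hn : n < p ^ 2) (hj : j ≤ n) {x y : ℤ}
    (hxy : x + y = n) (hdvd : (p : ℤ) ∣ j - x) :
    (padicValNat p (n.choose j) : ℤ) = ⌊(n : ℚ) / p⌋ - ⌊(x : ℚ) / p⌋ - ⌊(y : ℚ) / p⌋ := by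
  obtain ⟨c, hc⟩ := hdvd
  have hp0 : (p : ℤ) ≠ 0 := by exact_mod_cast hp.out.ne_zero
  have hx : x = j + (-c) * p := by linarith
  have hy : y = ((n - j : ℕ) : ℤ) + c * p := by push_cast [hj]; linarith
  have h := padicValNat_choose_add_div_add_div hn hj
  zify at h
  rw [Rat.floor_natCast_div_natCast, ← Int.cast_natCast, Rat.floor_intCast_div_natCast,
    ← Int.cast_natCast, Rat.floor_intCast_div_natCast, hx, hy, Int.add_mul_ediv_right _ _ hp0,
    Int.add_mul_ediv_right _ _ hp0]
  push_cast at h ⊢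
  linarith

theorem neg_mul_padicValInt_le_padicValRat_ratioIterDeriv (d : ℤ) (l : ℕ)
    (h : ratioIterDeriv (d : ℚ) l ≠ 0) :
    -(l * padicValInt p d) ≤ padicValRat p (ratioIterDeriv d l) := by
  rcases eq_or_ne d 0 with rfl | hd
  · simp only [Int.cast_zero, ratioIterDeriv, zero_mul, sub_zero] at h ⊢
    split_ifs <;> simp
  have hd' : (d : ℚ) ≠ 0 := by exact_mod_cast hd
  rw [ratioIterDeriv_of_ne_zero hd'] at h ⊢
  rcases eq_or_ne l 0 with rfl | hl
  · simp at h
  rw [if_neg hl, zero_sub, padicValRat.neg, mul_assoc, padicValRat_neg_one_pow_mul,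
    padicValRat.mul (by positivity) (by positivity), padicValRat.inv, padicValRat.pow,
    padicValRat.of_int, padicValRat.of_nat]
  simp

theorem le_padicValRat_sum {ι : Type*} (s : Finset ι) (f : ι → ℚ) {β : ℤ}
    (hf : ∀ i ∈ s, f i ≠ 0 → β ≤ padicValRat p (f i)) (hs : ∑ i ∈ s, f i ≠ 0) :
    β ≤ padicValRat p (∑ i ∈ s, f i) := by
  have key : ∀ q : ℚ, q ≠ 0 → (padicNorm p q ≤ (p : ℚ) ^ (-β) ↔ β ≤ padicValRat p q) := by
    intro q hq
    rw [padicNorm.eq_zpow_of_nonzero hq, zpow_le_zpow_iff_right₀ (by exact_mod_cast hp.out.one_lt),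
      neg_le_neg_iff]
  rw [← key _ hs]
  refine padicNorm.sum_le' (fun i hi => ?_) (by positivity)
  rcases eq_or_ne (f i) 0 with h | h
  · rw [h, padicNorm.zero]
    positivity
  · exact (key _ h).2 (hf i hi h)

theorem le_padicValRat_neg_one_pow_mul_choose_mul_ratioIterDeriv {n j l : ℕ} {x y : ℤ}
    (hn : n < p ^ 2) (hj : j ≤ n) (hxy : x + y = n) (hd : ((j : ℤ) - x).natAbs < p ^ 2)
    (hne : (-1) ^ j * n.choose j * ratioIterDeriv (((j - x : ℤ)) : ℚ) l ≠ 0) :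
    -(l : ℤ) + ⌊(n : ℚ) / p⌋ - ⌊(x : ℚ) / p⌋ - ⌊(y : ℚ) / p⌋ ≤
      padicValRat p ((-1) ^ j * n.choose j * ratioIterDeriv (((j - x : ℤ)) : ℚ) l) := by
  have hC : (n.choose j : ℚ) ≠ 0 := by exact_mod_cast (choose_pos hj).ne'
  have hR : ratioIterDeriv (((j - x : ℤ)) : ℚ) l ≠ 0 := right_ne_zero_of_mul hne
  have hRval := neg_mul_padicValInt_le_padicValRat_ratioIterDeriv (p := p) _ l hR
  rw [mul_assoc, padicValRat_neg_one_pow_mul, padicValRat.mul hC hR, padicValRat.of_nat]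
  by_cases hpd : (p : ℤ) ∣ j - x
  · rw [padicValNat_choose_eq_floor hn hj hxy hpd]
    have := padicValInt_le_one_of_natAbs_lt_sq hd
    nlinarith
  · rw [padicValInt.eq_zero_of_not_dvd hpd] at hRval
    have hl : l ≠ 0 := by
      rintro rfl
      have hd0 : (j : ℤ) - x ≠ 0 := fun h => hpd (h ▸ dvd_zero _)
      rw [ratioIterDeriv_of_ne_zero (Int.cast_ne_zero.2 hd0)] at hR
      simp at hR
    have hcarry : ⌊(n : ℚ) / p⌋ ≤ ⌊(x : ℚ) / p⌋ + ⌊(y : ℚ) / p⌋ + 1 := by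
      have := Int.le_floor_add_floor ((x : ℚ) / p) ((y : ℚ) / p)
      rw [← add_div, ← Int.cast_add, hxy, Int.cast_natCast] at this
      linarith
    have : (0 : ℤ) ≤ padicValNat p (n.choose j) := by positivity
    omega

end Valuation

/-- **Lemma (denominator-type elementary bricks, p-adic valuation).** Let `0 ≤ a ≤ b ≤ m` and
`G(t) = (b-a)! / (t+a)_{b-a+1}`. For every prime `p > √m`, every `0 ≤ k ≤ m` and every `λ ≥ 0`,
the rational number `(G(t)(t+k))^{(λ)}|_{t=-k}` (the derivative of the regular extension `h`)
has p-adic valuation at least `-λ + ⌊(b-a)/p⌋ - ⌊(k-a)/p⌋ - ⌊(b-k)/p⌋`. (With the convention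
`v_p(0) = +∞`, the case of a vanishing value is vacuous.) -/
theorem brick_denominator_padic_valuation (a b m : ℕ) (hab : a ≤ b) (hbm : b ≤ m)
    (p : ℕ) (hp : p.Prime) (hpm : Real.sqrt m < (p : ℝ))
    (k : ℕ) (hk : k ≤ m) (lam : ℕ) (h : ℝ → ℝ)
    (hagree : ∀ t : ℝ, t ≠ -(k : ℝ) →
      h t = ((b - a).factorial : ℝ) * (t + k) / poch (t + a) (b - a + 1))
    (hcont : ContinuousAt h (-(k : ℝ))) :
    ∀ q : ℚ, q ≠ 0 → iteratedDeriv lam h (-(k : ℝ)) = (q : ℝ) →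
      -(lam : ℤ) + ⌊((b : ℚ) - (a : ℚ)) / (p : ℚ)⌋ - ⌊((k : ℚ) - (a : ℚ)) / (p : ℚ)⌋
          - ⌊((b : ℚ) - (k : ℚ)) / (p : ℚ)⌋
        ≤ padicValRat p q := by
  intro q hq hval
  have : Fact p.Prime := ⟨hp⟩
  have hm : m < p ^ 2 := by exact_mod_cast (Real.sqrt_lt' (by exact_mod_cast hp.pos)).1 hpm
  have hq_eq : q = ∑ j ∈ range (b - a + 1),
      (-1) ^ j * (b - a).choose j * ratioIterDeriv (((j - ((k : ℤ) - a) : ℤ)) : ℚ) lam := by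
    apply Rat.cast_injective (α := ℝ)
    rw [← hval, iteratedDeriv_eq_sum_ratioIterDeriv (b - a) a k hagree hcont lam]
    push_cast
    exact sum_congr rfl fun j _ => by ring_nf
  rw [← Nat.cast_sub hab, show (k : ℚ) - a = (((k : ℤ) - a : ℤ) : ℚ) by push_cast; ring,
    show (b : ℚ) - k = (((b : ℤ) - k : ℤ) : ℚ) by push_cast; ring]
  rw [hq_eq] at hq ⊢
  refine le_padicValRat_sum _ _ (fun j hj hne =>
    le_padicValRat_neg_one_pow_mul_choose_mul_ratioIterDeriv ?_ ?_ ?_ ?_ hne) hq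
  all_goals simp only [mem_range] at hj; omega
end

section
/- As s → ∞ through multiples of 2J (with r = ⌊s/(log s)²⌋), the maximum of F over the unit cube satisfies log max_{(x_0,…,x_s) ∈ [0,1]^{s+1}} F(x_0,…,x_s) ∼ −(s·log s/J)·Σ_{j=1}^{J}(M−2δ_j); that is, the ratio of the left-hand side to −(s log s/J)·Σ_{j=1}^{J}(M−2δ_j) tends to 1. -/
/-- `r = ⌊s / (log s)²⌋`, the numerator length parameter of Ball–Rivoal. -/
noncomputable def rBR (s : ℕ) : ℕ := ⌊(s : ℝ) / Real.log s ^ 2⌋₊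

open Fin.NatCast in
/-- The function `F(x₀,…,x_s)` on the unit cube `[0,1]^{s+1}` (with `F(1,…,1) = 0`, which is the
value Lean's conventions give to the formula at `(1,…,1)`). -/
noncomputable def Ffun (J M : ℕ) (δ : ℕ → ℕ) (s r : ℕ) (x : Fin (s + 1) → ℝ) : ℝ :=
  (x 0 ^ r * (1 - x 0) ^ M *
      ∏ j ∈ Finset.Icc 1 J, ∏ k ∈ Finset.Icc 1 (s / J),
        x (((j - 1) * (s / J) + k : ℕ) : Fin (s + 1)) ^ (r + δ j) *
          (1 - x (((j - 1) * (s / J) + k : ℕ) : Fin (s + 1))) ^ (M - 2 * δ j)) /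
    (1 - ∏ i, x i) ^ (2 * r + M)

/-- The function `G(x₀,…,x_s) = (1 + x₀x₁⋯x_s)/(1 - x₀x₁⋯x_s)³` (with `G(1,…,1) = 0`, which is
the value Lean's conventions give to the formula at `(1,…,1)`). -/
noncomputable def Gfun (s : ℕ) (x : Fin (s + 1) → ℝ) : ℝ :=
  (1 + ∏ i, x i) / (1 - ∏ i, x i) ^ 3

/-- The unit cube `[0,1]^{s+1}`. -/
def unitCube (s : ℕ) : Set (Fin (s + 1) → ℝ) := Set.univ.pi fun _ => Set.Icc (0 : ℝ) 1


/-!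
Let `N = (s/J) Σⱼ (M - 2δⱼ)` be the total degree of the factors `1 - xᵢ` in the numerator of `F`
and `t = 1 - x₀⋯x_s`. Since `1 - xᵢ ≤ t` for every coordinate, the numerator is at most `t^N`;
since `x^r (1-x)^b ≤ b!/r^b`, it is also at most `M!^s r^{-N}`. Using the first bound when
`t ≤ 1/s` and the second otherwise gives `F ≤ M!^s r^{-N} s^{2r+M}`, while at the point
`xᵢ = 1 - 1/r` one has `F ≥ e^{-4(s+1)} r^{-N-M}`. Hence `log max F = -N log r + O(s + r log s)`,
and since `r = o(s)` and `log r ∼ log s` this is `∼ -N log s`.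
-/

open Filter Finset Real Topology

lemma tendsto_div_log_sq_atTop : Tendsto (fun x : ℝ => x / log x ^ 2) atTop atTop := by
  have h : Tendsto (fun x : ℝ => log x ^ 2 / x) atTop (𝓝[>] 0) := by
    refine tendsto_nhdsWithin_iff.2
      ⟨by simpa using tendsto_pow_log_div_mul_add_atTop 1 0 2 one_ne_zero, ?_⟩
    filter_upwards [eventually_gt_atTop 1] with x hx
    exact div_pos (pow_pos (log_pos hx) 2) (by linarith)
  exact h.inv_tendsto_nhdsGT_zero.congr fun x => inv_div _ _

lemma tendsto_rBR_atTop : Tendsto rBR atTop atTop :=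
  tendsto_nat_floor_atTop.comp (tendsto_div_log_sq_atTop.comp tendsto_natCast_atTop_atTop)

lemma rBR_le (s : ℕ) : (rBR s : ℝ) ≤ s / log s ^ 2 :=
  Nat.floor_le (by positivity)

lemma rBR_div_le (s : ℕ) : (rBR s : ℝ) / s ≤ (log s ^ 2)⁻¹ := by
  rcases eq_or_ne (s : ℝ) 0 with hs | hs
  · simp [hs]
  · calc (rBR s : ℝ) / s ≤ s / log s ^ 2 / s := by gcongr; exact rBR_le s
      _ = (log s ^ 2)⁻¹ := by field_simp

lemma tendsto_rBR_div_atTop : Tendsto (fun s : ℕ => (rBR s : ℝ) / s) atTop (𝓝 0) := by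
  have hlog : Tendsto (fun s : ℕ => log s) atTop atTop :=
    tendsto_log_atTop.comp tendsto_natCast_atTop_atTop
  refine squeeze_zero (fun s => by positivity) rBR_div_le ?_
  exact ((tendsto_pow_atTop two_ne_zero).comp hlog).inv_tendsto_atTop

lemma eventually_rBR_bounds (M : ℕ) :
    ∀ᶠ s : ℕ in atTop, 2 ≤ rBR s ∧ M ≤ rBR s ∧ 2 * rBR s + M ≤ s := by
  filter_upwards [tendsto_rBR_atTop.eventually_ge_atTop (M + 2),
    tendsto_rBR_div_atTop.eventually (gt_mem_nhds (by norm_num : (0 : ℝ) < 1 / 4)),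
    eventually_ge_atTop (2 * M + 1)] with s hr hrs hs
  have hs' : (0 : ℝ) < s := by exact_mod_cast (by omega : 0 < s)
  have hsM : (2 * M + 1 : ℝ) ≤ s := by exact_mod_cast hs
  have hrs' := (div_lt_iff₀ hs').1 hrs
  refine ⟨by omega, by omega, ?_⟩
  exact_mod_cast (show (2 * rBR s + M : ℝ) ≤ s by linarith)

lemma eventually_div_two_mul_log_sq_le_rBR :
    ∀ᶠ s : ℕ in atTop, (s : ℝ) / (2 * log s ^ 2) ≤ rBR s := by
  filter_upwards [(tendsto_div_log_sq_atTop.comp tendsto_natCast_atTop_atTop).eventually_ge_atTop 2]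
    with s hs
  have := Nat.sub_one_lt_floor ((s : ℝ) / log s ^ 2)
  have : (s : ℝ) / (2 * log s ^ 2) = s / log s ^ 2 / 2 := by ring
  simp only [Function.comp] at hs
  unfold rBR; linarith

lemma tendsto_log_rBR_div_log : Tendsto (fun s : ℕ => log (rBR s) / log s) atTop (𝓝 1) := by
  have hlog : Tendsto (fun s : ℕ => log s) atTop atTop :=
    tendsto_log_atTop.comp tendsto_natCast_atTop_atTop
  have hloglog : Tendsto (fun s : ℕ => (log 2 + 2 * log (log s)) / log s) atTop (𝓝 0) := by
    have h := (tendsto_const_nhds (x := log 2)).div_atTop hlog |>.add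
      ((isLittleO_log_id_atTop.tendsto_div_nhds_zero.comp hlog).const_mul 2)
    simp only [mul_zero, add_zero] at h
    refine h.congr fun s => ?_
    simp [add_div, mul_div_assoc]
  refine tendsto_of_tendsto_of_tendsto_of_le_of_le' (by simpa using hloglog.const_sub 1)
    tendsto_const_nhds ?_ ?_
  · filter_upwards [eventually_div_two_mul_log_sq_le_rBR, eventually_ge_atTop 2] with s hr hs
    have hlogs : 0 < log s := log_pos (by exact_mod_cast hs)
    have key : log s - (log 2 + 2 * log (log s)) ≤ log (rBR s) := calc
      log s - (log 2 + 2 * log (log s)) = log ((s : ℝ) / (2 * log s ^ 2)) := by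
          rw [log_div (by positivity) (by positivity), log_mul (by norm_num) (by positivity),
            log_pow]; push_cast; ring
      _ ≤ log (rBR s) := log_le_log (by positivity) hr
    rw [one_sub_div hlogs.ne']
    exact div_le_div_of_nonneg_right key hlogs.le
  · filter_upwards [eventually_rBR_bounds 0, eventually_ge_atTop 2] with s hr hs
    have hlogs : 0 < log s := log_pos (by exact_mod_cast hs)
    rw [div_le_one hlogs]
    exact log_le_log (by exact_mod_cast (by omega : 0 < rBR s))
      (by exact_mod_cast (by omega : rBR s ≤ s))

lemma pow_mul_mul_one_sub_pow_le_factorial {x : ℝ} (hx0 : 0 ≤ x) (hx1 : x ≤ 1) (n b : ℕ) :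
    x ^ n * (n * (1 - x)) ^ b ≤ b.factorial := by
  set y : ℝ := n * (1 - x) with hy_def
  have hy : 0 ≤ y := mul_nonneg n.cast_nonneg (by linarith)
  have hxn : x ^ n ≤ exp (-y) := calc
    x ^ n ≤ exp (x - 1) ^ n := pow_le_pow_left₀ hx0 (by linarith [add_one_le_exp (x - 1)]) n
    _ = exp (-y) := by rw [← exp_nat_mul, hy_def]; ring_nf
  have hyb : y ^ b ≤ b.factorial * exp y := by
    have := pow_div_factorial_le_exp y hy b
    rwa [div_le_iff₀ (by positivity), mul_comm] at this
  calc x ^ n * y ^ b ≤ exp (-y) * (b.factorial * exp y) :=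
        mul_le_mul hxn hyb (by positivity) (by positivity)
    _ = b.factorial := by rw [exp_neg]; field_simp

lemma exp_neg_four_le_one_sub_inv_pow {r e : ℕ} (hr : 2 ≤ r) (he : e ≤ 2 * r) :
    exp (-4) ≤ (1 - (r : ℝ)⁻¹) ^ e := by
  have hr' : (2 : ℝ) ≤ r := by exact_mod_cast hr
  have he' : (e : ℝ) ≤ 2 * r := by exact_mod_cast he
  have hc : 0 < 1 - (r : ℝ)⁻¹ := sub_pos.2 (inv_lt_one_of_one_lt₀ (by linarith))
  -- `log (1 - 1/r) ≥ 1 - r/(r-1) = -1/(r-1) ≥ -2/r`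
  have hlog : -(2 / r) ≤ log (1 - (r : ℝ)⁻¹) := by
    refine le_trans ?_ (one_sub_inv_le_log_of_pos hc)
    rw [show 1 - (1 - (r : ℝ)⁻¹)⁻¹ = -(1 / (r - 1)) by
      have : (r : ℝ) - 1 ≠ 0 := by linarith
      field_simp; ring, neg_le_neg_iff,
      div_le_div_iff₀ (by linarith) (by linarith)]
    linarith
  rw [← exp_log (pow_pos hc e), log_pow]
  refine exp_le_exp.2 (le_trans ?_ (mul_le_mul_of_nonneg_left hlog e.cast_nonneg))
  rw [mul_neg, neg_le_neg_iff, mul_div_assoc', div_le_iff₀ (by linarith)]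
  linarith

lemma prod_prod_le_prod_prod {ι κ : Type*} {S : Finset ι} {T : Finset κ} {f g : ι → κ → ℝ}
    (h0 : ∀ i ∈ S, ∀ k ∈ T, 0 ≤ f i k) (h : ∀ i ∈ S, ∀ k ∈ T, f i k ≤ g i k) :
    ∏ i ∈ S, ∏ k ∈ T, f i k ≤ ∏ i ∈ S, ∏ k ∈ T, g i k :=
  prod_le_prod (fun i hi => prod_nonneg (h0 i hi)) fun i hi => prod_le_prod (h0 i hi) (h i hi)

section BlockProduct

variable (J M : ℕ) (δ : ℕ → ℕ)

def oneSubDegree (n : ℕ) : ℕ := ∑ j ∈ Icc 1 J, n * (M - 2 * δ j)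

def blockProd (n r : ℕ) (y : ℕ → ℕ → ℝ) : ℝ :=
  ∏ j ∈ Icc 1 J, ∏ k ∈ Icc 1 n, y j k ^ (r + δ j) * (1 - y j k) ^ (M - 2 * δ j)

lemma prod_block_const_mul_pow (n : ℕ) (a b : ℝ) :
    ∏ j ∈ Icc 1 J, ∏ _k ∈ Icc 1 n, a * b ^ (M - 2 * δ j) =
      a ^ (J * n) * b ^ oneSubDegree J M δ n := by
  simp only [oneSubDegree, prod_const, Nat.card_Icc, add_tsub_cancel_right, mul_pow,
    prod_mul_distrib, prod_pow_eq_pow_sum, ← pow_mul, mul_comm n]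

variable {J M δ} {n r : ℕ} {y : ℕ → ℕ → ℝ}

lemma blockProd_factor_nonneg (hy : ∀ j k, y j k ∈ Set.Icc 0 1) (j k : ℕ) :
    0 ≤ y j k ^ (r + δ j) * (1 - y j k) ^ (M - 2 * δ j) :=
  mul_nonneg (pow_nonneg (hy j k).1 _) (pow_nonneg (by linarith [(hy j k).2]) _)

lemma blockProd_nonneg (hy : ∀ j k, y j k ∈ Set.Icc 0 1) : 0 ≤ blockProd J M δ n r y :=
  prod_nonneg fun j _ => prod_nonneg fun k _ => blockProd_factor_nonneg hy j k

lemma blockProd_le_pow {t : ℝ} (hy : ∀ j k, y j k ∈ Set.Icc 0 1) (ht : ∀ j k, 1 - y j k ≤ t) :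
    blockProd J M δ n r y ≤ t ^ oneSubDegree J M δ n := by
  rw [← one_mul (t ^ _), ← one_pow (J * n), ← prod_block_const_mul_pow]
  refine prod_prod_le_prod_prod (fun j _ k _ => blockProd_factor_nonneg hy j k) fun j _ k _ => ?_
  obtain ⟨hy0, hy1⟩ := hy j k
  exact mul_le_mul (pow_le_one₀ hy0 hy1) (pow_le_pow_left₀ (by linarith) (ht j k) _)
    (pow_nonneg (by linarith) _) zero_le_one

lemma blockProd_le_factorial (hr : 0 < r) (hy : ∀ j k, y j k ∈ Set.Icc 0 1) :
    blockProd J M δ n r y ≤ (M.factorial : ℝ) ^ (J * n) * (r : ℝ)⁻¹ ^ oneSubDegree J M δ n := by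
  rw [← prod_block_const_mul_pow]
  refine prod_prod_le_prod_prod (fun j _ k _ => blockProd_factor_nonneg hy j k) fun j _ k _ => ?_
  obtain ⟨hy0, hy1⟩ := hy j k
  have hr' : (r : ℝ) ≠ 0 := by exact_mod_cast hr.ne'
  calc y j k ^ (r + δ j) * (1 - y j k) ^ (M - 2 * δ j)
      ≤ y j k ^ r * (1 - y j k) ^ (M - 2 * δ j) :=
        mul_le_mul_of_nonneg_right (pow_le_pow_of_le_one hy0 hy1 (by omega))
          (pow_nonneg (by linarith) _)
    _ = y j k ^ r * (r * (1 - y j k)) ^ (M - 2 * δ j) * (r : ℝ)⁻¹ ^ (M - 2 * δ j) := by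
        rw [mul_assoc, ← mul_pow, mul_right_comm, mul_inv_cancel₀ hr', one_mul]
    _ ≤ (M - 2 * δ j).factorial * (r : ℝ)⁻¹ ^ (M - 2 * δ j) :=
        mul_le_mul_of_nonneg_right (pow_mul_mul_one_sub_pow_le_factorial hy0 hy1 _ _)
          (by positivity)
    _ ≤ M.factorial * (r : ℝ)⁻¹ ^ (M - 2 * δ j) := by
        gcongr; exact Nat.sub_le _ _

lemma le_blockProd_one_sub_inv (hr : 2 ≤ r) (hδr : ∀ j ∈ Icc 1 J, δ j ≤ r) :
    exp (-4) ^ (J * n) * (r : ℝ)⁻¹ ^ oneSubDegree J M δ n ≤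
      blockProd J M δ n r fun _ _ => 1 - (r : ℝ)⁻¹ := by
  rw [← prod_block_const_mul_pow]
  refine prod_prod_le_prod_prod (fun _ _ _ _ => by positivity) fun j hj _ _ => ?_
  rw [sub_sub_cancel]
  exact mul_le_mul_of_nonneg_right
    (exp_neg_four_le_one_sub_inv_pow hr (by linarith [hδr j hj])) (by positivity)

end BlockProduct

lemma div_pow_le_of_le_pow_of_le_mul {P t C r s : ℝ} {K N : ℕ} (ht : 0 < t) (hC : 1 ≤ C)
    (hr : 0 < r) (hrs : r ≤ s) (hKN : K ≤ N) (hPt : P ≤ t ^ N) (hPC : P ≤ C * r⁻¹ ^ N) :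
    P / t ^ K ≤ C * r⁻¹ ^ N * s ^ K := by
  have hs : 0 < s := hr.trans_le hrs
  by_cases hts : t ≤ s⁻¹
  · calc P / t ^ K ≤ t ^ N / t ^ K := by gcongr
      _ = t ^ (N - K) := by rw [pow_sub₀ _ ht.ne' hKN, div_eq_mul_inv]
      _ ≤ s⁻¹ ^ (N - K) := by gcongr
      _ = s⁻¹ ^ N * s ^ K := by rw [pow_sub₀ _ (inv_ne_zero hs.ne') hKN, inv_pow s K, inv_inv]
      _ ≤ 1 * r⁻¹ ^ N * s ^ K := by rw [one_mul]; gcongr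
      _ ≤ C * r⁻¹ ^ N * s ^ K := by gcongr
  · have hst : t⁻¹ ≤ s := by rw [not_le] at hts; exact (inv_le_comm₀ ht hs).2 hts.le
    calc P / t ^ K ≤ C * r⁻¹ ^ N * t⁻¹ ^ K := by
          rw [div_eq_mul_inv, ← inv_pow]; gcongr
      _ ≤ C * r⁻¹ ^ N * s ^ K := by gcongr

lemma prod_le_apply_of_mem_Icc {ι : Type*} [Fintype ι] {x : ι → ℝ}
    (hx : ∀ i, x i ∈ Set.Icc 0 1) (i : ι) : ∏ j, x j ≤ x i := by
  classical
  rw [← mul_prod_erase univ x (mem_univ i)]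
  exact mul_le_of_le_one_right (hx i).1 (prod_le_one (fun j _ => (hx j).1) fun j _ => (hx j).2)

open Fin.NatCast in
lemma Ffun_eq (J M : ℕ) (δ : ℕ → ℕ) (s r : ℕ) (x : Fin (s + 1) → ℝ) :
    Ffun J M δ s r x = x 0 ^ r * (1 - x 0) ^ M *
      blockProd J M δ (s / J) r (fun j k => x (((j - 1) * (s / J) + k : ℕ) : Fin (s + 1))) /
      (1 - ∏ i, x i) ^ (2 * r + M) :=
  rfl

section Ffun

variable {J M : ℕ} {δ : ℕ → ℕ} {s r : ℕ}

lemma Ffun_le {x : Fin (s + 1) → ℝ} (hx : x ∈ unitCube s) (hr : 0 < r) (hrs : r ≤ s)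
    (hKN : 2 * r + M ≤ oneSubDegree J M δ (s / J)) :
    Ffun J M δ s r x ≤
      (M.factorial : ℝ) ^ s * (r : ℝ)⁻¹ ^ oneSubDegree J M δ (s / J) * (s : ℝ) ^ (2 * r + M) := by
  have hx01 : ∀ i, x i ∈ Set.Icc 0 1 := fun i => hx i (Set.mem_univ i)
  have hM : (1 : ℝ) ≤ M.factorial := by exact_mod_cast M.factorial_pos
  have hx0 : x 0 ^ r * (1 - x 0) ^ M ≤ 1 :=
    mul_le_one₀ (pow_le_one₀ (hx01 0).1 (hx01 0).2) (pow_nonneg (by linarith [(hx01 0).2]) _)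
      (pow_le_one₀ (by linarith [(hx01 0).2]) (by linarith [(hx01 0).1]))
  rw [Ffun_eq]
  rcases (sub_nonneg.2 (prod_le_one (fun i _ => (hx01 i).1) fun i _ => (hx01 i).2)).eq_or_lt
    with ht | ht
  · rw [← ht, zero_pow (by omega), div_zero]
    positivity
  refine (div_le_div_of_nonneg_right (mul_le_of_le_one_left (blockProd_nonneg fun _ _ => hx01 _) hx0)
    (pow_nonneg ht.le _)).trans (div_pow_le_of_le_pow_of_le_mul ht (one_le_pow₀ hM)
      (by exact_mod_cast hr) (by exact_mod_cast hrs) hKN ?_ ?_)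
  · exact blockProd_le_pow (fun _ _ => hx01 _) fun _ _ =>
      sub_le_sub_left (prod_le_apply_of_mem_Icc hx01 _) 1
  · exact (blockProd_le_factorial hr fun _ _ => hx01 _).trans
      (by gcongr; exact Nat.mul_div_le s J)

lemma le_Ffun_one_sub_inv (hr : 2 ≤ r) (hMr : M ≤ r) (hδM : ∀ j ∈ Icc 1 J, 2 * δ j < M) :
    exp (-4) ^ (s + 1) * (r : ℝ)⁻¹ ^ (oneSubDegree J M δ (s / J) + M) ≤
      Ffun J M δ s r fun _ => 1 - (r : ℝ)⁻¹ := by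
  have hr1 : (r : ℝ)⁻¹ ≤ 1 := inv_le_one_of_one_le₀ (by exact_mod_cast (by omega : 1 ≤ r))
  have hr0 : 0 < (r : ℝ)⁻¹ := inv_pos.2 (by exact_mod_cast (by omega : 0 < r))
  have hc : 1 - (r : ℝ)⁻¹ ∈ Set.Icc 0 1 := ⟨by linarith, by linarith⟩
  have hx0 : exp (-4) * (r : ℝ)⁻¹ ^ M ≤ (1 - (r : ℝ)⁻¹) ^ r * (1 - (1 - (r : ℝ)⁻¹)) ^ M := by
    rw [sub_sub_cancel]
    exact mul_le_mul_of_nonneg_right (exp_neg_four_le_one_sub_inv_pow hr (by omega)) (by positivity)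
  have hblock := le_blockProd_one_sub_inv (J := J) (M := M) (δ := δ) (n := s / J) hr
    fun j hj => by linarith [hδM j hj]
  have hcs : (1 - (r : ℝ)⁻¹) ^ (s + 1) ∈ Set.Ico 0 1 :=
    ⟨pow_nonneg hc.1 _, pow_lt_one₀ hc.1 (by linarith) (by omega)⟩
  have hden : (1 - (1 - (r : ℝ)⁻¹) ^ (s + 1)) ^ (2 * r + M) ∈ Set.Ioc 0 1 :=
    ⟨pow_pos (by linarith [hcs.2]) _, pow_le_one₀ (by linarith [hcs.2]) (by linarith [hcs.1])⟩
  rw [Ffun_eq]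
  simp only [prod_const, card_univ, Fintype.card_fin]
  calc exp (-4) ^ (s + 1) * (r : ℝ)⁻¹ ^ (oneSubDegree J M δ (s / J) + M)
      ≤ exp (-4) * (r : ℝ)⁻¹ ^ M * (exp (-4) ^ (J * (s / J)) * (r : ℝ)⁻¹ ^ oneSubDegree J M δ (s / J)) := by
        have hs : exp (-4) ^ s ≤ exp (-4) ^ (J * (s / J)) :=
          pow_le_pow_of_le_one (exp_nonneg _) (exp_le_one_iff.2 (by norm_num)) (Nat.mul_div_le s J)
        calc _ = exp (-4) * (r : ℝ)⁻¹ ^ M *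
              (exp (-4) ^ s * (r : ℝ)⁻¹ ^ oneSubDegree J M δ (s / J)) := by ring
          _ ≤ _ := by gcongr
    _ ≤ _ := mul_le_mul hx0 hblock (by positivity)
          (mul_nonneg (pow_nonneg hc.1 _) (pow_nonneg (by linarith [hc.2]) _))
    _ ≤ _ := le_div_self (mul_nonneg (mul_nonneg (pow_nonneg hc.1 _)
          (pow_nonneg (by linarith [hc.2]) _)) (blockProd_nonneg fun _ _ => hc)) hden.1 hden.2

lemma le_oneSubDegree (hδM : ∀ j ∈ Icc 1 J, 2 * δ j < M) (hJs : J ∣ s) :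
    s ≤ oneSubDegree J M δ (s / J) :=
  calc s = ∑ _j ∈ Icc 1 J, s / J * 1 := by simp [Nat.mul_div_cancel' hJs]
    _ ≤ _ := sum_le_sum fun j hj => Nat.mul_le_mul_left _ (by have := hδM j hj; omega)

lemma cast_oneSubDegree (hδM : ∀ j ∈ Icc 1 J, 2 * δ j < M) (hJs : J ∣ s) :
    (oneSubDegree J M δ (s / J) : ℝ) = s / J * ∑ j ∈ Icc 1 J, ((M : ℝ) - 2 * δ j) := by
  rw [oneSubDegree, Nat.cast_sum, mul_sum]
  refine sum_congr rfl fun j hj => ?_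
  rw [Nat.cast_mul, Nat.cast_div_charZero hJs, Nat.cast_sub (hδM j hj).le]
  push_cast; ring

lemma sSup_Ffun_mem_Icc (hδM : ∀ j ∈ Icc 1 J, 2 * δ j < M) (hr : 2 ≤ r) (hMr : M ≤ r)
    (hrs : r ≤ s) (hKN : 2 * r + M ≤ oneSubDegree J M δ (s / J)) :
    sSup (Ffun J M δ s r '' unitCube s) ∈
      Set.Icc (exp (-4) ^ (s + 1) * (r : ℝ)⁻¹ ^ (oneSubDegree J M δ (s / J) + M))
        ((M.factorial : ℝ) ^ s * (r : ℝ)⁻¹ ^ oneSubDegree J M δ (s / J) * (s : ℝ) ^ (2 * r + M)) := by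
  have hc : (fun _ => 1 - (r : ℝ)⁻¹) ∈ unitCube s := fun _ _ =>
    ⟨sub_nonneg.2 (inv_le_one_of_one_le₀ (by exact_mod_cast (by omega : 1 ≤ r))),
      sub_le_self _ (inv_nonneg.2 r.cast_nonneg)⟩
  have hupper : ∀ z ∈ Ffun J M δ s r '' unitCube s,
      z ≤ (M.factorial : ℝ) ^ s * (r : ℝ)⁻¹ ^ oneSubDegree J M δ (s / J) * (s : ℝ) ^ (2 * r + M) := by
    rintro _ ⟨x, hx, rfl⟩
    exact Ffun_le hx (by omega) hrs hKN
  exact ⟨(le_Ffun_one_sub_inv hr hMr hδM).trans (le_csSup ⟨_, hupper⟩ (Set.mem_image_of_mem _ hc)),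
    csSup_le ⟨_, Set.mem_image_of_mem _ hc⟩ hupper⟩

lemma abs_log_sSup_Ffun_add_le (hδM : ∀ j ∈ Icc 1 J, 2 * δ j < M) (hJs : J ∣ s) (hr : 2 ≤ r)
    (hMr : M ≤ r) (hrs : 2 * r + M ≤ s) :
    |log (sSup (Ffun J M δ s r '' unitCube s)) + oneSubDegree J M δ (s / J) * log r| ≤
      s * (log M.factorial + 8) + 2 * (r + M) * log s := by
  set N := oneSubDegree J M δ (s / J)
  have hsN := le_oneSubDegree hδM hJs
  obtain ⟨hlower, hupper⟩ := sSup_Ffun_mem_Icc (s := s) hδM hr hMr (by omega) (by omega)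
  have hr0 : (0 : ℝ) < r := by exact_mod_cast (by omega : 0 < r)
  have hs1 : (1 : ℝ) ≤ s := by exact_mod_cast (by omega : 1 ≤ s)
  have hrN : (r : ℝ)⁻¹ ^ N ≠ 0 := pow_ne_zero _ (inv_ne_zero hr0.ne')
  have hrNM : (r : ℝ)⁻¹ ^ (N + M) ≠ 0 := pow_ne_zero _ (inv_ne_zero hr0.ne')
  have hM : (M.factorial : ℝ) ^ s ≠ 0 := pow_ne_zero _ (by exact_mod_cast M.factorial_ne_zero)
  have hpos : 0 < exp (-4) ^ (s + 1) * (r : ℝ)⁻¹ ^ (N + M) := by positivity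
  have hlog_le := log_le_log (hpos.trans_le hlower) hupper
  have hlog_ge := log_le_log hpos hlower
  rw [log_mul (mul_ne_zero hM hrN) (pow_ne_zero _ (by linarith)), log_mul hM hrN,
    log_pow, log_pow, log_pow, log_inv] at hlog_le
  rw [log_mul (by positivity) hrNM, log_pow, log_pow, log_inv, log_exp] at hlog_ge
  push_cast at hlog_le hlog_ge
  have hlogs : 0 ≤ log s := log_nonneg hs1
  have hlogr : log r ≤ log s := log_le_log hr0 (by exact_mod_cast (by omega : r ≤ s))
  have hfac : 0 ≤ log M.factorial := log_nonneg (by exact_mod_cast M.factorial_pos)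
  have h1 : (M : ℝ) * log r ≤ M * log s := mul_le_mul_of_nonneg_left hlogr M.cast_nonneg
  have h2 : 0 ≤ (r : ℝ) * log s := mul_nonneg hr0.le hlogs
  have h2' : 0 ≤ (M : ℝ) * log s := mul_nonneg M.cast_nonneg hlogs
  have h3 : 0 ≤ (s : ℝ) * log M.factorial := mul_nonneg (by linarith) hfac
  rw [abs_le]
  constructor <;> linarith

end Ffun

lemma tendsto_div_of_abs_sub_le {α : Type*} {l : Filter α} {a b c d E : α → ℝ}
    (hb : Tendsto (fun x => b x / d x) l (𝓝 1)) (hE : Tendsto (fun x => E x / c x) l (𝓝 0))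
    (hab : ∀ᶠ x in l, |a x - b x| ≤ E x) (hcd : ∀ᶠ x in l, 0 < c x ∧ c x ≤ d x) :
    Tendsto (fun x => a x / d x) l (𝓝 1) := by
  have h0 : Tendsto (fun x => (a x - b x) / d x) l (𝓝 0) := by
    refine squeeze_zero_norm' ?_ hE
    filter_upwards [hab, hcd] with x h ⟨hc, hcd⟩
    rw [norm_div, norm_eq_abs, norm_eq_abs, abs_of_pos (hc.trans_le hcd)]
    exact (div_le_div_of_nonneg_right h (hc.trans_le hcd).le).trans
      (div_le_div_of_nonneg_left ((abs_nonneg _).trans h) hc hcd)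
  simpa using (h0.add hb).congr fun x => by rw [← add_div, sub_add_cancel]

lemma tendsto_mul_add_rBR_mul_log_div (a m : ℝ) :
    Tendsto (fun s : ℕ => (s * a + 2 * (rBR s + m) * log s) / (s * log s)) atTop (𝓝 0) := by
  have hlog : Tendsto (fun s : ℕ => log s) atTop atTop :=
    tendsto_log_atTop.comp tendsto_natCast_atTop_atTop
  have h := (tendsto_const_nhds (x := a)).div_atTop hlog |>.add
    ((tendsto_rBR_div_atTop.add ((tendsto_const_nhds (x := m)).div_atTop
      tendsto_natCast_atTop_atTop)).const_mul 2)
  simp only [add_zero, mul_zero] at h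
  refine h.congr' ?_
  filter_upwards [eventually_ge_atTop 2] with s hs
  have hs : (2 : ℝ) ≤ s := by exact_mod_cast hs
  have hlogs : log s ≠ 0 := (log_pos (by linarith)).ne'
  field_simp

open Filter in
theorem log_max_F_asymptotics_general
    (J M : ℕ) (δ : ℕ → ℕ)
    (hδM : ∀ j ∈ Finset.Icc 1 J, 2 * δ j < M) :
    Tendsto (fun s : ℕ =>
        Real.log (sSup (Ffun J M δ s (rBR s) '' unitCube s)) /
          (-((s : ℝ) * Real.log s / (J : ℝ)) *
            ∑ j ∈ Finset.Icc 1 J, ((M : ℝ) - 2 * (δ j : ℝ))))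
      (atTop ⊓ Filter.principal {s : ℕ | 2 * J ∣ s}) (nhds 1) := by
  have hev : ∀ᶠ s in atTop ⊓ 𝓟 {s | 2 * J ∣ s},
      J ∣ s ∧ 2 ≤ rBR s ∧ M ≤ rBR s ∧ 2 * rBR s + M ≤ s := by
    rw [eventually_inf_principal]
    filter_upwards [eventually_rBR_bounds M] with s h hs using ⟨(Dvd.intro_left 2 rfl).trans hs, h⟩
  refine (tendsto_div_of_abs_sub_le
    (a := fun s => -log (sSup (Ffun J M δ s (rBR s) '' unitCube s)))
    (b := fun s => oneSubDegree J M δ (s / J) * log (rBR s))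
    (c := fun s => s * log s) (d := fun s => oneSubDegree J M δ (s / J) * log s)
    (E := fun s => s * (log M.factorial + 8) + 2 * (rBR s + M) * log s)
    ?_ ((tendsto_mul_add_rBR_mul_log_div _ _).mono_left inf_le_left) ?_ ?_).congr' ?_
  · refine (tendsto_log_rBR_div_log.mono_left inf_le_left).congr' ?_
    filter_upwards [hev] with s ⟨hJs, hr, _, hrs⟩
    rw [mul_div_mul_left _ _ (by exact_mod_cast (by have := le_oneSubDegree hδM hJs; omega))]
  · filter_upwards [hev] with s ⟨hJs, hr, hMr, hrs⟩
    rw [← neg_add', abs_neg]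
    exact abs_log_sSup_Ffun_add_le hδM hJs hr hMr hrs
  · filter_upwards [hev] with s ⟨hJs, hr, _, hrs⟩
    have hs : (1 : ℝ) < s := by exact_mod_cast (by omega : 1 < s)
    exact ⟨by have := log_pos hs; positivity,
      mul_le_mul_of_nonneg_right (by exact_mod_cast le_oneSubDegree hδM hJs) (log_pos hs).le⟩
  · filter_upwards [hev] with s ⟨hJs, _⟩
    rw [cast_oneSubDegree hδM hJs]
    ring

open Filter in
/-- **Asymptotics of the maximum of `F`.** As `s → ∞` through multiples of `2J` (with
`r = ⌊s/(log s)²⌋`), `log max_{[0,1]^{s+1}} F ∼ -(s·log s/J)·Σ_{j=1}^J (M-2δⱼ)`. -/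
theorem log_max_F_asymptotics
    (J M : ℕ) (δ : ℕ → ℕ) (hJ : 1 ≤ J) (hM : 1 ≤ M)
    (hδ : ∀ i ∈ Finset.Icc 1 J, ∀ j ∈ Finset.Icc 1 J, i ≤ j → δ i ≤ δ j)
    (hδM : ∀ j ∈ Finset.Icc 1 J, 2 * δ j < M) :
    Tendsto (fun s : ℕ =>
        Real.log (sSup (Ffun J M δ s (rBR s) '' unitCube s)) /
          (-((s : ℝ) * Real.log s / (J : ℝ)) *
            ∑ j ∈ Finset.Icc 1 J, ((M : ℝ) - 2 * (δ j : ℝ))))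
      (atTop ⊓ Filter.principal {s : ℕ | 2 * J ∣ s}) (nhds 1) :=
  log_max_F_asymptotics_general J M δ hδM
end
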